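/- arXiv:2403.01154 — 6 statements merged into one kernel-verified Lean document; each statement's English description precedes it below -/
import Mathlib

section
/- Let M be a symmetric real n×n matrix (n ≥ 1) such that M_{ij} ≥ 0 for all i ≠ j, and suppose the graph on {1,…,n} with an edge between i and j whenever M_{ij} > 0 (i ≠ j) is connected. If u ∈ ℤ^n is a nonzero vector with u_i ≥ 0 for all i satisfying (Mu)_k ≤ 0 for every k, then u_i ≥ 1 for every i. -/
open Matrix

theorem stmt0 {n : ℕ} (hn : 1 ≤ n) (M : Matrix (Fin n) (Fin n) ℝ)
    (hsymm : ∀ i j, M i j = M j i)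
    (hoff : ∀ i j, i ≠ j → 0 ≤ M i j)
    (hconn : (SimpleGraph.fromRel fun i j : Fin n => 0 < M i j).Connected)
    (u : Fin n → ℤ) (hu0 : u ≠ 0) (hunn : ∀ i, 0 ≤ u i)
    (hMu : ∀ k, ∑ j, M k j * (u j : ℝ) ≤ 0) :
    ∀ i, 1 ≤ u i := by
  intro i
  by_contra h
  push_neg at h
  have hi0 : u i = 0 := le_antisymm (by omega) (hunn i)
  have step : ∀ a b : Fin n,
      (SimpleGraph.fromRel fun i j : Fin n => 0 < M i j).Adj a b → u a = 0 → u b = 0 := by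
    intro a b hab ha
    obtain ⟨hne, hlt⟩ := hab
    have hM : 0 < M a b := by
      rcases hlt with h' | h'
      · exact h'
      · rwa [hsymm]
    have hnn : ∀ j ∈ Finset.univ, 0 ≤ M a j * (u j : ℝ) := by
      intro j _
      by_cases hj : j = a
      · subst hj; simp [ha]
      · exact mul_nonneg (hoff a j (Ne.symm hj)) (by exact_mod_cast hunn j)
    have hsum0 : ∑ j, M a j * (u j : ℝ) = 0 :=
      le_antisymm (hMu a) (Finset.sum_nonneg hnn)
    have hterm := (Finset.sum_eq_zero_iff_of_nonneg hnn).mp hsum0 b (Finset.mem_univ b)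
    rcases mul_eq_zero.mp hterm with h' | h'
    · exact absurd h' (ne_of_gt hM)
    · exact_mod_cast h'
  have walk0 : ∀ a b : Fin n,
      (SimpleGraph.fromRel fun i j : Fin n => 0 < M i j).Walk a b → u a = 0 → u b = 0 := by
    intro a b w
    induction w with
    | nil => exact fun h => h
    | cons hadj w ih => exact fun ha => ih (step _ _ hadj ha)
  have hall : ∀ j, u j = 0 := fun j => walk0 i j (hconn i j).some hi0
  exact hu0 (funext hall)
end

section
/- Let M be a symmetric real n×n matrix with M_{ij} ≥ 0 for all i ≠ j, and suppose the graph on {1,…,n} with edges where M_{ij} > 0 is connected. Define S to be the set of nonzero vectors u ∈ ℤ^n with u_i ≥ 0 for all i and (Mu)_k ≤ 0 for all k. If u, v ∈ S, then the componentwise minimum w, defined by w_i = min(u_i, v_i), also belongs to S. -/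
open Matrix

/-- The set of nonzero nonnegative integer vectors `u` with `(Mu)ₖ ≤ 0` for all `k`. -/
def InS {n : ℕ} (M : Matrix (Fin n) (Fin n) ℝ) (u : Fin n → ℤ) : Prop :=
  u ≠ 0 ∧ (∀ i, 0 ≤ u i) ∧ ∀ k, ∑ j, M k j * (u j : ℝ) ≤ 0

lemma InS.pos {n : ℕ} {M : Matrix (Fin n) (Fin n) ℝ}
    (hsymm : ∀ i j, M i j = M j i)
    (hoff : ∀ i j, i ≠ j → 0 ≤ M i j)
    (hconn : (SimpleGraph.fromRel fun i j : Fin n => 0 < M i j).Connected)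
    {u : Fin n → ℤ} (hu : InS M u) : ∀ i, 0 < u i := by
  obtain ⟨hne, hnn, hMu⟩ := hu
  obtain ⟨i0, hi0⟩ := Function.ne_iff.mp hne
  have hi0pos : 0 < u i0 := lt_of_le_of_ne (hnn i0) (Ne.symm hi0)
  -- adjacency step
  have step : ∀ a b : Fin n, (SimpleGraph.fromRel fun i j : Fin n => 0 < M i j).Adj a b →
      0 < u a → 0 < u b := by
    intro a b hab hua
    by_contra hub
    have hub0 : u b = 0 := le_antisymm (not_lt.mp hub) (hnn b)
    obtain ⟨hne', hM⟩ := hab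
    have hMba : 0 < M b a := by
      rcases hM with h | h
      · rwa [← hsymm]
      · exact h
    have hsum : ∑ j, M b j * (u j : ℝ) ≤ 0 := hMu b
    have hterm : ∀ j ∈ Finset.univ.erase b, 0 ≤ M b j * (u j : ℝ) := by
      intro j hj
      have hjb : j ≠ b := Finset.ne_of_mem_erase hj
      exact mul_nonneg (hoff b j (Ne.symm hjb)) (by exact_mod_cast hnn j)
    have hsplit : ∑ j, M b j * (u j : ℝ)
        = M b b * (u b : ℝ) + ∑ j ∈ Finset.univ.erase b, M b j * (u j : ℝ) := by
      rw [← Finset.add_sum_erase _ _ (Finset.mem_univ b)]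
    rw [hsplit, hub0] at hsum
    simp only [Int.cast_zero, mul_zero, zero_add] at hsum
    have hall : ∀ j ∈ Finset.univ.erase b, M b j * (u j : ℝ) = 0 :=
      (Finset.sum_eq_zero_iff_of_nonneg hterm).mp (le_antisymm hsum (Finset.sum_nonneg hterm))
    have ha : M b a * (u a : ℝ) = 0 :=
      hall a (Finset.mem_erase.mpr ⟨hne', Finset.mem_univ a⟩)
    have : 0 < M b a * (u a : ℝ) :=
      mul_pos hMba (by exact_mod_cast hua)
    linarith
  have walklem : ∀ a i : Fin n,
      (SimpleGraph.fromRel fun i j : Fin n => 0 < M i j).Walk a i → 0 < u a → 0 < u i := by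
    intro a i w
    induction w with
    | nil => exact fun h => h
    | cons h p ih => exact fun ha => ih (step _ _ h ha)
  intro i
  obtain ⟨w⟩ := hconn.preconnected i0 i
  exact walklem i0 i w hi0pos

theorem stmt1 {n : ℕ} (M : Matrix (Fin n) (Fin n) ℝ)
    (hsymm : ∀ i j, M i j = M j i)
    (hoff : ∀ i j, i ≠ j → 0 ≤ M i j)
    (hconn : (SimpleGraph.fromRel fun i j : Fin n => 0 < M i j).Connected)
    (u v : Fin n → ℤ) (hu : InS M u) (hv : InS M v) :
    InS M (fun i => min (u i) (v i)) := by
  have hupos := hu.pos hsymm hoff hconn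
  have hvpos := hv.pos hsymm hoff hconn
  obtain ⟨hne, hunn, hMu⟩ := hu
  obtain ⟨-, hvnn, hMv⟩ := hv
  refine ⟨?_, fun i => le_min (hunn i) (hvnn i), ?_⟩
  · obtain ⟨i0, -⟩ := Function.ne_iff.mp hne
    exact Function.ne_iff.mpr ⟨i0, by
      have : 0 < min (u i0) (v i0) := lt_min (hupos i0) (hvpos i0)
      simpa using this.ne'⟩
  · intro k
    rcases le_total (u k) (v k) with hk | hk
    · calc ∑ j, M k j * ((min (u j) (v j) : ℤ) : ℝ) ≤ ∑ j, M k j * (u j : ℝ) := by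
            apply Finset.sum_le_sum
            intro j _
            rcases eq_or_ne j k with rfl | hjk
            · simp [min_eq_left hk]
            · exact mul_le_mul_of_nonneg_left (by exact_mod_cast min_le_left (u j) (v j))
                (hoff k j (Ne.symm hjk))
        _ ≤ 0 := hMu k
    · calc ∑ j, M k j * ((min (u j) (v j) : ℤ) : ℝ) ≤ ∑ j, M k j * (v j : ℝ) := by
            apply Finset.sum_le_sum
            intro j _
            rcases eq_or_ne j k with rfl | hjk
            · simp [min_eq_right hk]
            · exact mul_le_mul_of_nonneg_left (by exact_mod_cast min_le_right (u j) (v j))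
                (hoff k j (Ne.symm hjk))
        _ ≤ 0 := hMv k
end

section
/- Let M be a symmetric real n×n matrix with nonnegative off-diagonal entries and connected associated graph, and suppose the set S of nonzero nonnegative integer vectors u with Mu ≤ 0 (componentwise) is nonempty with least element c. Suppose v ∈ ℤ^n satisfies 0 ≠ v, v_i ≥ 0 for all i, v ≤ c componentwise, and (Mv)_k > 0 for some index k. Then v_k < c_k, i.e., v + e_k ≤ c, where e_k is the k-th standard basis vector. -/
open Matrix

theorem stmt4 {n : ℕ} (M : Matrix (Fin n) (Fin n) ℝ)
    (hsymm : ∀ i j, M i j = M j i)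
    (hoff : ∀ i j, i ≠ j → 0 ≤ M i j)
    (hconn : (SimpleGraph.fromRel fun i j : Fin n => 0 < M i j).Connected)
    (c : Fin n → ℤ)
    (hc : InS M c ∧ ∀ u, InS M u → ∀ i, c i ≤ u i)
    (v : Fin n → ℤ) (hv0 : v ≠ 0) (hvnn : ∀ i, 0 ≤ v i)
    (hvc : ∀ i, v i ≤ c i)
    (k : Fin n) (hk : 0 < ∑ j, M k j * (v j : ℝ)) :
    v k < c k := by
  by_contra h
  push_neg at h
  have heq : v k = c k := le_antisymm (hvc k) h
  have hw : 0 ≤ ∑ j, M k j * ((c j : ℝ) - (v j : ℝ)) := by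
    apply Finset.sum_nonneg
    intro j _
    rcases eq_or_ne j k with rfl | hne
    · rw [heq]; simp
    · have h1 : (0:ℝ) ≤ (c j : ℝ) - (v j : ℝ) := by
        have h2 : (v j : ℝ) ≤ (c j : ℝ) := by exact_mod_cast hvc j
        linarith
      exact mul_nonneg (hoff k j (Ne.symm hne)) h1
  have hMc : ∑ j, M k j * (c j : ℝ) ≤ 0 := hc.1.2.2 k
  have hsplit : ∑ j, M k j * ((c j : ℝ) - (v j : ℝ))
      = ∑ j, M k j * (c j : ℝ) - ∑ j, M k j * (v j : ℝ) := by
    rw [← Finset.sum_sub_distrib]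
    congr 1; ext j; ring
  linarith [hsplit ▸ hw]
end

section
/- For every natural number m ≥ 1, the infimum over all pairs (p₁, p₂) of positive integers of the quantity p₁ + p₂ − min( ((2m−1)/m²)·m·p₁ , ((2m−1)/m²)·(m+1)·p₂ ) equals 1/m, and this infimum is attained at (p₁, p₂) = (m+1, m). -/
lemma auxA (k p₁ p₂ : ℕ) (hp₂ : 1 ≤ p₂)
    (h : (k + 1) * p₁ ≤ (k + 2) * p₂) : k * p₁ + 1 ≤ (k + 1) * p₂ := by
  have h2 : (k + 1) * (k * p₁) < (k + 1) * ((k + 1) * p₂) := by nlinarith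
  have := Nat.lt_of_mul_lt_mul_left h2
  omega

lemma auxB (k p₁ p₂ : ℕ) (hp₂ : 1 ≤ p₂)
    (h : (k + 2) * p₂ ≤ (k + 1) * p₁) :
    ((k + 1) * (k + 1) + k) * p₂ + (k + 1) ≤ (k + 1) * (k + 1) * p₁ := by
  have h2 : (k + 1) * p₂ < (k + 1) * p₁ := by nlinarith
  have hp : p₂ < p₁ := Nat.lt_of_mul_lt_mul_left h2
  rcases le_or_gt p₂ (k + 1) with hc | hc
  · have h4 : (k + 1) * (k + 1) * (p₂ + 1) ≤ (k + 1) * (k + 1) * p₁ :=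
      Nat.mul_le_mul_left _ hp
    nlinarith
  · have h4 : (k + 1) * ((k + 2) * p₂) ≤ (k + 1) * ((k + 1) * p₁) :=
      Nat.mul_le_mul_left _ h
    nlinarith

theorem stmt11 (m : ℕ) (hm : 1 ≤ m) :
    IsLeast {x : ℝ | ∃ p₁ p₂ : ℕ, 1 ≤ p₁ ∧ 1 ≤ p₂ ∧
        x = (p₁ : ℝ) + p₂ -
          min (((2 * m - 1) / (m : ℝ) ^ 2) * m * p₁)
            (((2 * m - 1) / (m : ℝ) ^ 2) * (m + 1) * p₂)} (1 / m) ∧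
    ((m : ℝ) + 1) + m -
        min (((2 * m - 1) / (m : ℝ) ^ 2) * m * ((m : ℝ) + 1))
          (((2 * m - 1) / (m : ℝ) ^ 2) * (m + 1) * m) = 1 / m := by
  have hm' : (1 : ℝ) ≤ (m : ℝ) := by exact_mod_cast hm
  have hm0 : (0 : ℝ) < (m : ℝ) := by linarith
  have hm2 : (0 : ℝ) < (m : ℝ) ^ 2 := by positivity
  have hmne : (m : ℝ) ≠ 0 := ne_of_gt hm0
  have hlam : (0 : ℝ) < (2 * m - 1) / (m : ℝ) ^ 2 := div_pos (by linarith) hm2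
  have hval : ((m : ℝ) + 1) + m -
      min (((2 * m - 1) / (m : ℝ) ^ 2) * m * ((m : ℝ) + 1))
        (((2 * m - 1) / (m : ℝ) ^ 2) * (m + 1) * m) = 1 / m := by
    have heq : ((2 * m - 1) / (m : ℝ) ^ 2) * m * ((m : ℝ) + 1) =
        ((2 * m - 1) / (m : ℝ) ^ 2) * (m + 1) * m := by ring
    rw [heq, min_self]
    field_simp
    ring
  refine ⟨⟨⟨m + 1, m, by omega, hm, ?_⟩, ?_⟩, hval⟩
  · push_cast
    exact hval.symm
  · rintro x ⟨p₁, p₂, hp₁, hp₂, rfl⟩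
    obtain ⟨k, rfl⟩ : ∃ k, m = k + 1 := ⟨m - 1, by omega⟩
    have hk : ((k + 1 : ℕ) : ℝ) = (k : ℝ) + 1 := by push_cast; ring
    rcases min_cases (((2 * (k + 1 : ℕ) - 1) / ((k + 1 : ℕ) : ℝ) ^ 2) * (k + 1 : ℕ) * p₁)
        (((2 * (k + 1 : ℕ) - 1) / ((k + 1 : ℕ) : ℝ) ^ 2) * ((k + 1 : ℕ) + 1) * p₂)
        with ⟨hmin, hle⟩ | ⟨hmin, hle⟩
    · rw [hmin]
      have hR : ((k : ℝ) + 1) * p₁ ≤ ((k : ℝ) + 2) * p₂ := by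
        rw [hk] at hle hlam
        nlinarith
      have hN : (k + 1) * p₁ ≤ (k + 2) * p₂ := by exact_mod_cast hR
      have key := auxA k p₁ p₂ hp₂ hN
      have keyR : (k : ℝ) * p₁ + 1 ≤ ((k : ℝ) + 1) * p₂ := by exact_mod_cast key
      have hE : (p₁ : ℝ) + p₂ - ((2 * (k + 1 : ℕ) - 1) / ((k + 1 : ℕ) : ℝ) ^ 2)
            * (k + 1 : ℕ) * p₁ =
          (((k : ℝ) + 1) * p₂ - (k : ℝ) * p₁) / ((k : ℝ) + 1) := by
        rw [hk]
        have : ((k : ℝ) + 1) ≠ 0 := by positivity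
        field_simp
        ring
      rw [hE, hk, div_le_div_iff₀ (by positivity : (0:ℝ) < (k:ℝ)+1) (by positivity)]
      rw [hk] at hm0
      nlinarith
    · rw [hmin]
      have hR : ((k : ℝ) + 2) * p₂ ≤ ((k : ℝ) + 1) * p₁ := by
        rw [hk] at hle hlam
        nlinarith
      have hN : (k + 2) * p₂ ≤ (k + 1) * p₁ := by exact_mod_cast hR
      have key := auxB k p₁ p₂ hp₂ hN
      have keyR : (((k : ℝ) + 1) * ((k : ℝ) + 1) + k) * p₂ + ((k : ℝ) + 1) ≤
          ((k : ℝ) + 1) * ((k : ℝ) + 1) * p₁ := by exact_mod_cast key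
      have hE : (p₁ : ℝ) + p₂ - ((2 * (k + 1 : ℕ) - 1) / ((k + 1 : ℕ) : ℝ) ^ 2)
            * ((k + 1 : ℕ) + 1) * p₂ =
          (((k : ℝ) + 1) * ((k : ℝ) + 1) * p₁ - ((((k : ℝ) + 1) * ((k : ℝ) + 1) + k) * p₂))
            / ((k : ℝ) + 1) ^ 2 := by
        rw [hk]
        have : ((k : ℝ) + 1) ≠ 0 := by positivity
        field_simp
        ring
      rw [hE, hk]
      rw [show (1 : ℝ) / ((k : ℝ) + 1) = ((k : ℝ) + 1) / ((k : ℝ) + 1) ^ 2 by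
        field_simp]
      rw [div_le_div_iff₀ (by positivity) (by positivity)]
      nlinarith
end

section
/- Let M be a symmetric real n×n matrix with nonnegative off-diagonal entries and connected associated graph, let S be the set of nonzero nonnegative integer vectors u with Mu ≤ 0 componentwise, nonempty with least element c. Fix any index i₀ and define a sequence by v⁰ = e_{i₀}, and v^{l+1} = v^l + e_{k_l} whenever there exists an index k_l with (M v^l)_{k_l} > 0 (choosing any such index), stopping when M v^l ≤ 0 componentwise. Then the process terminates after finitely many steps, and the final vector equals c. -/
open Matrix

/-- Laufer's algorithm: starting from a single basis vector, as long as some coordinate of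
`M v` is positive, add the corresponding basis vector; the process terminates at the
fundamental cycle `c`. -/
theorem stmt13 {n : ℕ} (M : Matrix (Fin n) (Fin n) ℝ)
    (hsymm : ∀ i j, M i j = M j i)
    (hoff : ∀ i j, i ≠ j → 0 ≤ M i j)
    (hconn : (SimpleGraph.fromRel fun i j : Fin n => 0 < M i j).Connected)
    (c : Fin n → ℤ)
    (hc : InS M c ∧ ∀ u, InS M u → ∀ i, c i ≤ u i)
    (i₀ : Fin n) (v : ℕ → Fin n → ℤ)
    (hv0 : v 0 = Pi.single i₀ 1)
    (hstep : ∀ l, (∃ k, 0 < ∑ j, M k j * (v l j : ℝ)) →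
      ∃ k, 0 < ∑ j, M k j * (v l j : ℝ) ∧ v (l + 1) = v l + Pi.single k 1) :
    ∃ N, (∀ k, ∑ j, M k j * (v N j : ℝ) ≤ 0) ∧ v N = c := by
  classical
  obtain ⟨⟨hc0, hcnn, hcle⟩, hcmin⟩ := hc
  -- every element of S is strictly positive everywhere
  have hposS : ∀ u : Fin n → ℤ, InS M u → ∀ i, 0 < u i := by
    rintro u ⟨hu0, hunn, hule⟩ i
    have hj : ∃ j, 0 < u j := by
      by_contra h
      push_neg at h
      exact hu0 (funext fun j => le_antisymm (h j) (hunn j))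
    obtain ⟨j, hj⟩ := hj
    have step : ∀ a b : Fin n,
        (SimpleGraph.fromRel fun i j : Fin n => 0 < M i j).Adj a b →
        0 < u a → 0 < u b := by
      intro a b hab ha
      rcases lt_or_ge 0 (u b) with h | h
      · exact h
      have hb0 : u b = 0 := le_antisymm h (hunn b)
      exfalso
      have hMba : 0 < M b a := by
        rcases hab with ⟨hne, h1 | h1⟩
        · rw [hsymm]; exact h1
        · exact h1
      have hpos : 0 < ∑ j', M b j' * (u j' : ℝ) := by
        apply Finset.sum_pos'
        · intro j' _
          by_cases hj' : j' = b
          · subst hj'; rw [hb0]; simp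
          · exact mul_nonneg (hoff b j' (fun h => hj' h.symm))
              (by exact_mod_cast hunn j')
        · exact ⟨a, Finset.mem_univ a, mul_pos hMba (by exact_mod_cast ha)⟩
      exact absurd (hule b) (not_le.mpr hpos)
    have main : ∀ a b : Fin n,
        ∀ w : (SimpleGraph.fromRel fun i j : Fin n => 0 < M i j).Walk a b,
        0 < u a → 0 < u b := by
      intro a b w
      induction w with
      | nil => exact id
      | cons h p ih => intro ha; exact ih (step _ _ h ha)
    exact (hconn.preconnected j i).elim fun w => main j i w hj
  have hc1 : ∀ i, 1 ≤ c i := fun i => hposS c ⟨hc0, hcnn, hcle⟩ i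
  -- key lemma: a saturated coordinate cannot be increased
  have key : ∀ w : Fin n → ℤ, (∀ i, w i ≤ c i) →
      ∀ k, 0 < ∑ j, M k j * (w j : ℝ) → w k < c k := by
    intro w hw k hk
    by_contra h
    push_neg at h
    have hwk' : w k = c k := le_antisymm (hw k) h
    have hwk : (w k : ℝ) = (c k : ℝ) := by exact_mod_cast hwk'
    have hle : ∑ j, M k j * (w j : ℝ) ≤ ∑ j, M k j * (c j : ℝ) := by
      apply Finset.sum_le_sum
      intro j _
      by_cases hj : j = k
      · subst hj; rw [hwk]
      · exact mul_le_mul_of_nonneg_left (by exact_mod_cast hw j)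
          (hoff k j (fun h => hj h.symm))
    exact absurd hk (not_lt.mpr (hle.trans (hcle k)))
  -- main induction
  have H : ∀ l : ℕ, (∀ m, m < l → ∃ k, 0 < ∑ j, M k j * (v m j : ℝ)) →
      (∀ i, 0 ≤ v l i) ∧ (∀ i, v l i ≤ c i) ∧ (∑ i, v l i) = (l : ℤ) + 1 := by
    intro l
    induction l with
    | zero =>
      intro _
      refine ⟨?_, ?_, ?_⟩
      · intro i; rw [hv0, Pi.single_apply]
        by_cases h : i = i₀ <;> simp [h]
      · intro i; rw [hv0, Pi.single_apply]
        by_cases h : i = i₀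
        · simpa [h] using hc1 i
        · simp only [h, if_false]
          exact le_trans (by norm_num) (hc1 i)
      · rw [hv0]; simp
    | succ l ih =>
      intro hpre
      obtain ⟨k, hk, hkeq⟩ := hstep l (hpre l (Nat.lt_succ_self l))
      obtain ⟨h1, h2, h3⟩ := ih (fun m hm => hpre m (hm.trans (Nat.lt_succ_self l)))
      have hklt : v l k < c k := key (v l) h2 k hk
      refine ⟨?_, ?_, ?_⟩
      · intro i
        rw [hkeq]
        simp only [Pi.add_apply, Pi.single_apply]
        have ha := h1 i
        have hb := h1 k
        by_cases h : i = k
        · subst h; simp; omega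
        · simp [h]; omega
      · intro i
        rw [hkeq]
        simp only [Pi.add_apply, Pi.single_apply]
        by_cases h : i = k
        · subst h; simp; omega
        · simpa [h] using h2 i
      · rw [hkeq]
        simp only [Pi.add_apply, Finset.sum_add_distrib, h3]
        rw [Finset.sum_pi_single']
        simp
  -- termination
  have hterm : ∃ N, ∀ k, ∑ j, M k j * (v N j : ℝ) ≤ 0 := by
    by_contra h
    push_neg at h
    set S : ℕ := (∑ i, c i).toNat with hSdef
    obtain ⟨_, h2, h3⟩ := H S (fun m _ => h m)
    have hS : (S : ℤ) = ∑ i, c i :=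
      Int.toNat_of_nonneg (Finset.sum_nonneg fun i _ => hcnn i)
    have hsum : (∑ i, v S i) ≤ ∑ i, c i := Finset.sum_le_sum fun i _ => h2 i
    omega
  let N := Nat.find hterm
  have hN : ∀ k, ∑ j, M k j * (v N j : ℝ) ≤ 0 := Nat.find_spec hterm
  have hpre : ∀ m, m < N → ∃ k, 0 < ∑ j, M k j * (v m j : ℝ) := by
    intro m hm
    have := Nat.find_min hterm hm
    push_neg at this
    exact this
  obtain ⟨h1, h2, h3⟩ := H N hpre
  have hne : v N ≠ 0 := by
    intro h
    rw [h] at h3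
    simp at h3
    omega
  have hle := hcmin (v N) ⟨hne, h1, hN⟩
  exact ⟨N, hN, funext fun i => le_antisymm (h2 i) (hle i)⟩
end

section
/- Let M be a symmetric negative definite real n×n matrix with nonnegative off-diagonal entries. Then for every index i₀ there exists a nonzero nonnegative integer vector u with u_{i₀} ≥ 1 and Mu ≤ 0 componentwise. Consequently, if in addition the associated graph is connected, the set S of nonzero nonnegative integer vectors u with Mu ≤ 0 is nonempty. -/
open Matrix

theorem stmt14 {n : ℕ} (M : Matrix (Fin n) (Fin n) ℝ)
    (hsymm : ∀ i j, M i j = M j i)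
    (hoff : ∀ i j, i ≠ j → 0 ≤ M i j)
    (hND : ∀ x : Fin n → ℝ, x ≠ 0 → ∑ i, ∑ j, x i * M i j * x j < 0) :
    (∀ i₀ : Fin n, ∃ u : Fin n → ℤ, (∀ i, 0 ≤ u i) ∧ 1 ≤ u i₀ ∧
      ∀ k, ∑ j, M k j * (u j : ℝ) ≤ 0) ∧
    ((SimpleGraph.fromRel fun i j : Fin n => 0 < M i j).Connected → ∃ u, InS M u) := by
  classical
  -- quadratic form rewriting
  have hquad : ∀ x : Fin n → ℝ,
      ∑ i, ∑ j, x i * M i j * x j = ∑ i, x i * ∑ j, M i j * x j := by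
    intro x
    refine Finset.sum_congr rfl fun i _ => ?_
    rw [Finset.mul_sum]
    exact Finset.sum_congr rfl fun j _ => by ring
  -- injectivity of mulVecLin
  have hinj : Function.Injective (Matrix.mulVecLin M) := by
    rw [injective_iff_map_eq_zero]
    intro x hx
    by_contra hx0
    have hlt := hND x hx0
    have h0 : ∑ i, ∑ j, x i * M i j * x j = 0 := by
      rw [hquad]
      refine Finset.sum_eq_zero fun i _ => ?_
      have : Matrix.mulVec M x i = 0 := by
        rw [show Matrix.mulVec M x = 0 from hx]; rfl
      simp only [Matrix.mulVec, dotProduct] at this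
      rw [this, mul_zero]
    linarith
  have hsurj : Function.Surjective (Matrix.mulVecLin M) :=
    LinearMap.injective_iff_surjective.mp hinj
  obtain ⟨x, hx⟩ := hsurj (fun _ => (-1 : ℝ))
  have hMx : ∀ k, ∑ j, M k j * x j = -1 := by
    intro k
    have := congrFun hx k
    simpa [Matrix.mulVecLin, Matrix.mulVec, dotProduct] using this
  -- nonnegativity of x
  have hx_nonneg : ∀ i, 0 ≤ x i := by
    by_contra h
    push_neg at h
    obtain ⟨i₁, hi₁⟩ := h
    set y : Fin n → ℝ := fun i => max (-x i) 0 with hy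
    have hy_nonneg : ∀ i, 0 ≤ y i := fun i => le_max_right _ _
    have hy_ge : ∀ i, -x i ≤ y i := fun i => le_max_left _ _
    have hy0 : y ≠ 0 := by
      intro h0
      have h1 := congrFun h0 i₁
      simp only [hy, Pi.zero_apply] at h1
      have := le_max_left (-x i₁) 0
      rw [h1] at this
      linarith
    have hlt := hND y hy0
    -- Q(y) = T + ∑ y i where T ≥ 0
    have hsplit : ∑ i, ∑ j, y i * M i j * y j =
        (∑ i, ∑ j, y i * M i j * (x j + y j)) - ∑ i, y i * ∑ j, M i j * x j := by
      rw [← Finset.sum_sub_distrib]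
      refine Finset.sum_congr rfl fun i _ => ?_
      rw [Finset.mul_sum, ← Finset.sum_sub_distrib]
      refine Finset.sum_congr rfl fun j _ => by ring
    have hT : 0 ≤ ∑ i, ∑ j, y i * M i j * (x j + y j) := by
      refine Finset.sum_nonneg fun i _ => Finset.sum_nonneg fun j _ => ?_
      rcases eq_or_ne i j with rfl | hij
      · rcases le_or_gt 0 (x i) with hxi | hxi
        · have : y i = 0 := by simp [hy, max_eq_right, neg_nonpos.mpr hxi]
          simp [this]
        · have : y i = -x i := by simp [hy]; linarith
          rw [this]; ring_nf
          have : x i + -x i = 0 := by ring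
          nlinarith [this]
      · have h1 : 0 ≤ x j + y j := by have := hy_ge j; linarith
        exact mul_nonneg (mul_nonneg (hy_nonneg i) (hoff i j hij)) h1
    have hS : ∑ i, y i * ∑ j, M i j * x j = -∑ i, y i := by
      rw [← Finset.sum_neg_distrib]
      refine Finset.sum_congr rfl fun i _ => ?_
      rw [hMx i]; ring
    have hSy : 0 ≤ ∑ i, y i := Finset.sum_nonneg fun i _ => hy_nonneg i
    rw [hsplit, hS] at hlt
    linarith
  -- strict positivity of x
  have hx_pos : ∀ k, 0 < x k := by
    intro k
    rcases lt_or_ge 0 (x k) with h | h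
    · exact h
    have hxk : x k = 0 := le_antisymm h (hx_nonneg k)
    have hge : (0 : ℝ) ≤ ∑ j, M k j * x j := by
      refine Finset.sum_nonneg fun j _ => ?_
      rcases eq_or_ne j k with rfl | hjk
      · rw [hxk, mul_zero]
      · exact mul_nonneg (hoff k j (Ne.symm hjk)) (hx_nonneg j)
    rw [hMx k] at hge
    linarith
  -- rounding
  set B : ℝ := ∑ k, ∑ j, |M k j| with hBdef
  have hB_nonneg : 0 ≤ B :=
    Finset.sum_nonneg fun k _ => Finset.sum_nonneg fun j _ => abs_nonneg _
  have hBk : ∀ k, ∑ j, |M k j| ≤ B := by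
    intro k
    exact Finset.single_le_sum (f := fun k => ∑ j, |M k j|)
      (fun i _ => Finset.sum_nonneg fun j _ => abs_nonneg _) (Finset.mem_univ k)
  set N : ℕ := ⌈B⌉₊ + 1 with hNdef
  have hNB : B ≤ (N : ℝ) := by
    have := Nat.le_ceil B
    have h2 : ((⌈B⌉₊ : ℝ)) ≤ ((⌈B⌉₊ + 1 : ℕ) : ℝ) := by push_cast; linarith
    calc B ≤ (⌈B⌉₊ : ℝ) := this
      _ ≤ (N : ℝ) := by rw [hNdef]; push_cast; linarith
  have hN_pos : 0 < (N : ℝ) := by positivity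
  set u : Fin n → ℤ := fun j => ⌈(N : ℝ) * x j⌉ with hu
  have hu_one : ∀ j, 1 ≤ u j := by
    intro j
    have : (0 : ℝ) < (N : ℝ) * x j := mul_pos hN_pos (hx_pos j)
    have h2 := Int.ceil_pos.mpr this
    simp only [hu]
    omega
  have hu_nonneg : ∀ j, 0 ≤ u j := fun j => le_trans (by norm_num) (hu_one j)
  have hu_ineq : ∀ k, ∑ j, M k j * (u j : ℝ) ≤ 0 := by
    intro k
    have expand : ∑ j, M k j * (u j : ℝ) =
        (N : ℝ) * ∑ j, M k j * x j + ∑ j, M k j * ((u j : ℝ) - (N : ℝ) * x j) := by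
      rw [Finset.mul_sum, ← Finset.sum_add_distrib]
      refine Finset.sum_congr rfl fun j _ => by ring
    have hE : ∑ j, M k j * ((u j : ℝ) - (N : ℝ) * x j) ≤ ∑ j, |M k j| := by
      refine Finset.sum_le_sum fun j _ => ?_
      have hδ0 : (0 : ℝ) ≤ (u j : ℝ) - (N : ℝ) * x j := by
        have := Int.le_ceil ((N : ℝ) * x j)
        simp only [hu]
        linarith
      have hδ1 : (u j : ℝ) - (N : ℝ) * x j ≤ 1 := by
        have := Int.ceil_lt_add_one ((N : ℝ) * x j)
        simp only [hu]
        linarith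
      nlinarith [le_abs_self (M k j), neg_abs_le (M k j), abs_nonneg (M k j)]
    rw [expand, hMx k]
    have := hBk k
    linarith
  have main : ∀ i₀ : Fin n, ∃ u : Fin n → ℤ, (∀ i, 0 ≤ u i) ∧ 1 ≤ u i₀ ∧
      ∀ k, ∑ j, M k j * (u j : ℝ) ≤ 0 :=
    fun i₀ => ⟨u, hu_nonneg, hu_one i₀, hu_ineq⟩
  refine ⟨main, fun hconn => ?_⟩
  obtain ⟨i₀⟩ := hconn.nonempty
  obtain ⟨v, hv0, hv1, hvM⟩ := main i₀
  refine ⟨v, ?_, hv0, hvM⟩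
  intro h
  rw [h] at hv1
  simp at hv1
end
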